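/- Let D be an integral domain with quotient field K, n a positive integer, and P a set of monic polynomials in D[X] of degree n. Let f = g/d ∈ K[X] with g ∈ D[X] and d ∈ D \ {0}. Then f belongs to Int(Mₙ^P(D), Mₙ(D)) if and only if for every p ∈ P, g lies in the ideal of D[X] generated by d and p. -/

import Mathlib

open Polynomial

/-- `IntOn D K S` is the set of polynomials `f ∈ K[X]` that are integer-valued on the set
`S ⊆ Mₙ(D)`: for every `M ∈ S`, evaluating `f` at the image of `M` in `Mₙ(K)` yields a matrix
all of whose entries lie in (the image of) `D`. -/
def IntOn (D K : Type*) [CommRing D] [Field K] [Algebra D K] {n : ℕ}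
    (S : Set (Matrix (Fin n) (Fin n) D)) : Set (Polynomial K) :=
  {f | ∀ M ∈ S, ∀ i j, ∃ d : D,
    algebraMap D K d = (Polynomial.aeval (M.map (algebraMap D K)) f) i j}

/-!
Since `f(M) = g(M) / d`, the polynomial `f` is integer-valued at `M` exactly when `d` divides
every entry of `g(M)`. If `g = d a + b χ_M`, Cayley–Hamilton gives `g(M) = d a(M)`. Conversely,
the companion matrix of `p ∈ P` has characteristic polynomial `p`, and the first column of `g`
evaluated at it is the coefficient vector of `g %ₘ p`; so `d ∣ g %ₘ p`, and
`g = (g %ₘ p) + p (g /ₘ p)` lies in `(d, p)`.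
-/

section Companion

variable {R : Type*} [CommRing R] {p : R[X]}

theorem AdjoinRoot.minpoly_root_of_monic (hp : p.Monic) : minpoly R (root p) = p := by
  refine (minpoly.unique' R _ hp (by simp [aeval_eq]) fun q hq => ?_).symm
  rcases eq_or_ne q 0 with rfl | hq0
  · exact Or.inl rfl
  · exact Or.inr (by rw [aeval_eq]; exact mk_ne_zero_of_degree_lt hp hq0 hq)

namespace Polynomial.Monic

noncomputable def companion (hp : p.Monic) :
    Matrix (Fin p.natDegree) (Fin p.natDegree) R :=
  Algebra.leftMulMatrix (AdjoinRoot.powerBasisAux' hp) (AdjoinRoot.root p)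

theorem charpoly_companion (hp : p.Monic) : hp.companion.charpoly = p :=
  (charpoly_leftMulMatrix (AdjoinRoot.powerBasis' hp)).trans (AdjoinRoot.minpoly_root_of_monic hp)

theorem aeval_companion_apply (hp : p.Monic) (q : R[X]) (i j : Fin p.natDegree) :
    aeval hp.companion q i j = (q * X ^ (j : ℕ) %ₘ p).coeff i := by
  rw [companion, aeval_algHom_apply, AdjoinRoot.aeval_eq, Algebra.leftMulMatrix_eq_repr_mul,
    AdjoinRoot.powerBasisAux'_repr_apply_to_fun]
  have hbasis : AdjoinRoot.powerBasisAux' hp j = AdjoinRoot.mk p (X ^ (j : ℕ)) := by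
    rw [map_pow, AdjoinRoot.mk_X]
    exact (AdjoinRoot.powerBasis' hp).basis_eq_pow j
  rw [hbasis, ← map_mul, AdjoinRoot.modByMonicHom_mk]

theorem mem_span_C_of_dvd_aeval_companion (hp : p.Monic) {g : R[X]} {d : R}
    (h : ∀ i j, d ∣ aeval hp.companion g i j) : g ∈ Ideal.span {C d, p} := by
  have hmod : C d ∣ g %ₘ p := by
    refine (C_dvd_iff_dvd_coeff d _).mpr fun k => ?_
    by_cases hk : k < p.natDegree
    · simpa [aeval_companion_apply] using h ⟨k, hk⟩ ⟨0, by omega⟩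
    · nontriviality R
      rw [coeff_eq_zero_of_degree_lt]
      · exact dvd_zero d
      · refine (degree_modByMonic_lt g hp).trans_le (degree_le_natDegree.trans ?_)
        exact_mod_cast not_lt.mp hk
  obtain ⟨a, ha⟩ := hmod
  refine Ideal.mem_span_pair.mpr ⟨a, g /ₘ p, ?_⟩
  rw [mul_comm a, ← ha, mul_comm _ p, modByMonic_add_div]

end Polynomial.Monic

end Companion

theorem Matrix.dvd_aeval_apply_of_mem_span_C_charpoly {R ι : Type*} [CommRing R] [Fintype ι]
    [DecidableEq ι] (M : Matrix ι ι R) {g : R[X]} {d : R}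
    (h : g ∈ Ideal.span {C d, M.charpoly}) (i j : ι) : d ∣ aeval M g i j := by
  obtain ⟨a, b, rfl⟩ := Ideal.mem_span_pair.mp h
  refine ⟨aeval M a i j, ?_⟩
  simp [aeval_self_charpoly, Algebra.algebraMap_eq_smul_one]

section Denominator

variable {D K ι : Type*} [CommRing D] [CommRing K] [Algebra D K] [Fintype ι] [DecidableEq ι]
  {f : K[X]} {g : D[X]} {d : D}

theorem map_aeval_eq_smul_aeval_map (hf : f * C (algebraMap D K d) = g.map (algebraMap D K))
    (M : Matrix ι ι D) :
    (aeval M g).map (algebraMap D K) = algebraMap D K d • aeval (M.map (algebraMap D K)) f := by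
  have hmap : (aeval M g).map (algebraMap D K) = aeval (M.map (algebraMap D K)) g :=
    (aeval_algHom_apply (Algebra.ofId D K).mapMatrix M g).symm
  rw [hmap, ← aeval_map_algebraMap K, ← hf, map_mul, aeval_C, Algebra.algebraMap_eq_smul_one,
    mul_smul_comm, mul_one]

theorem exists_algebraMap_eq_aeval_map_apply_iff [IsDomain K]
    (hφ : Function.Injective (algebraMap D K)) (hd : d ≠ 0)
    (hf : f * C (algebraMap D K d) = g.map (algebraMap D K)) (M : Matrix ι ι D) (i j : ι) :
    (∃ c, algebraMap D K c = aeval (M.map (algebraMap D K)) f i j) ↔ d ∣ aeval M g i j := by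
  have key := congrFun (congrFun (map_aeval_eq_smul_aeval_map hf M) i) j
  simp only [Matrix.map_apply, Matrix.smul_apply, smul_eq_mul] at key
  constructor
  · rintro ⟨c, hc⟩
    exact ⟨c, hφ (by rw [key, ← hc, map_mul])⟩
  · rintro ⟨c, hc⟩
    refine ⟨c, mul_left_cancel₀ ((map_ne_zero_iff _ hφ).mpr hd) ?_⟩
    rw [← map_mul, ← hc, key]

end Denominator

theorem mem_intOn_charpolySet_iff_general (D K : Type*) [CommRing D] [Field K]
    [Algebra D K] [IsFractionRing D K] (n : ℕ) (P : Set (Polynomial D))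
    (hP : ∀ p ∈ P, p.Monic ∧ p.natDegree = n) (g : D[X]) (d : D) (hd : d ≠ 0) (f : K[X])
    (hf : f * C (algebraMap D K d) = g.map (algebraMap D K)) :
    f ∈ IntOn D K {M : Matrix (Fin n) (Fin n) D | M.charpoly ∈ P} ↔
      ∀ p ∈ P, g ∈ Ideal.span {Polynomial.C d, p} := by
  simp only [IntOn, Set.mem_ofPred_eq,
    exists_algebraMap_eq_aeval_map_apply_iff (IsFractionRing.injective D K) hd hf]
  refine ⟨fun h p hp => ?_, fun h M hM => M.dvd_aeval_apply_of_mem_span_C_charpoly (h _ hM)⟩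
  obtain ⟨hpm, rfl⟩ := hP p hp
  exact hpm.mem_span_C_of_dvd_aeval_companion (h _ (hpm.charpoly_companion.symm ▸ hp))

/-- Let `D` be a domain with quotient field `K`, `n` positive and `P` a set of
monic polynomials in `D[X]` of degree `n`.  Let `f = g/d ∈ K[X]` with `g ∈ D[X]`,
`d ∈ D \ {0}`.  Then `f ∈ Int(Mₙ^P(D), Mₙ(D))` iff for every `p ∈ P`, `g` lies in the ideal of
`D[X]` generated by `d` and `p`. -/
theorem mem_intOn_charpolySet_iff (D K : Type*) [CommRing D] [IsDomain D] [Field K]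
    [Algebra D K] [IsFractionRing D K] (n : ℕ) (hn : 0 < n) (P : Set (Polynomial D))
    (hP : ∀ p ∈ P, p.Monic ∧ p.natDegree = n) (g : D[X]) (d : D) (hd : d ≠ 0) (f : K[X])
    (hf : f * C (algebraMap D K d) = g.map (algebraMap D K)) :
    f ∈ IntOn D K {M : Matrix (Fin n) (Fin n) D | M.charpoly ∈ P} ↔
      ∀ p ∈ P, g ∈ Ideal.span {Polynomial.C d, p} :=
  mem_intOn_charpolySet_iff_general D K n P hP g d hd f hf
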